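/- For n odd, n ≥ 3, the maximum over all proper 3-colorings c of C_n of the maximum size of a critical set for c equals n - 1. That is, LCS_max(C_n) = n - 1. -/

import Mathlib

open SimpleGraph Finset

/-- A proper `k`-coloring of a simple graph: adjacent vertices get distinct colors. -/
def properColoring {V : Type*} (G : SimpleGraph V) (k : ℕ) (c : V → Fin k) : Prop :=
  ∀ ⦃v w : V⦄, G.Adj v w → c v ≠ c w

/-- `S` is a determining set for `(G, c)`: `c` is the unique proper `k`-coloring
agreeing with `c` on `S`. -/
def Determining {V : Type*} (G : SimpleGraph V) {k : ℕ} (c : V → Fin k) (S : Finset V) : Prop :=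
  ∀ c' : V → Fin k, properColoring G k c' → (∀ v ∈ S, c' v = c v) → c' = c

/-- A critical set: an inclusion-minimal determining set. -/
def CriticalSet {V : Type*} (G : SimpleGraph V) {k : ℕ} (c : V → Fin k) (S : Finset V) : Prop :=
  Determining G c S ∧ ∀ T : Finset V, T ⊂ S → ¬ Determining G c T

/-- The cycle graph on `Fin n`, with `i` adjacent to `i ± 1` (mod `n`). -/
def cycGraph (n : ℕ) [NeZero n] : SimpleGraph (Fin n) :=
  SimpleGraph.fromRel (fun i j => i + 1 = j)

/-- A vertex is colorful if every color appears on its closed neighborhood. -/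
def Colorful {V : Type*} (G : SimpleGraph V) {k : ℕ} (c : V → Fin k) (v : V) : Prop :=
  ∀ a : Fin k, ∃ w : V, (w = v ∨ G.Adj v w) ∧ c w = a

/-- `G` is uniquely `k`-colorable: any two proper `k`-colorings differ by a permutation
of the colors. -/
def UniquelyColorable {V : Type*} (G : SimpleGraph V) (k : ℕ) : Prop :=
  ∀ c c' : V → Fin k, properColoring G k c → properColoring G k c' →
    ∃ π : Equiv.Perm (Fin k), c' = π ∘ c

/-!
A vertex whose closed neighbourhood carries every colour is forced by the colours of all other
vertices, so the whole vertex set is never critical once such a vertex exists. On an odd cycle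
one always does: otherwise `c v = c (v + 2)` for all `v`, and since `2` generates `ℤ/n` the
colouring would be constant. Conversely, colour `0` with `2` and alternate `0, 1` along the path
`1, …, n - 1`. Then `0` is forced by the remaining `n - 1` vertices, and forgetting any further
vertex `v` allows a second colouring: give `v` the colour `2` if it is not adjacent to `0`, and
otherwise swap the colours of `v` and `0`.
-/

namespace properColoring

variable {V : Type*} {G : SimpleGraph V} {k : ℕ} {c : V → Fin k}

lemma update [DecidableEq V] (hc : properColoring G k c) {v : V} {a : Fin k}
    (ha : ∀ w, G.Adj v w → c w ≠ a) : properColoring G k (Function.update c v a) := by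
  intro x y hxy
  by_cases hx : x = v <;> by_cases hy : y = v
  · subst hx hy; exact absurd hxy G.irrefl
  · subst hx; simpa [hy] using (ha y hxy).symm
  · subst hy; simpa [hx] using ha x hxy.symm
  · simpa [hx, hy] using hc hxy

lemma comp_swap [DecidableEq V] (hc : properColoring G k c) {u v : V} (huv : G.Adj u v)
    (hu : ∀ w, G.Adj u w → w ≠ v → c w ≠ c v) (hv : ∀ w, G.Adj v w → w ≠ u → c w ≠ c u) :
    properColoring G k (c ∘ Equiv.swap u v) := by
  intro x y hxy
  simp only [Function.comp_apply, Equiv.swap_apply_def]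
  split_ifs <;> subst_vars
  all_goals first
    | exact absurd hxy G.irrefl | exact hc hxy | exact hc hxy.symm
    | exact (hu _ hxy ‹_›).symm | exact hu _ hxy.symm ‹_›
    | exact (hv _ hxy ‹_›).symm | exact hv _ hxy.symm ‹_›

end properColoring

section Critical

variable {V : Type*} {G : SimpleGraph V} {k : ℕ} {c : V → Fin k}

lemma exists_recoloring_of_unique_color [DecidableEq V] (hc : properColoring G k c) {u : V}
    (hu : ∀ w, w ≠ u → c w ≠ c u) (hN : Set.InjOn c (G.neighborSet u)) {v : V} (hvu : v ≠ u) :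
    ∃ c', properColoring G k c' ∧ c' ≠ c ∧ ∀ w, w ≠ u → w ≠ v → c' w = c w := by
  by_cases huv : G.Adj u v
  · refine ⟨c ∘ Equiv.swap u v, hc.comp_swap huv ?_ ?_, fun h => ?_, fun w hwu hwv => ?_⟩
    · exact fun w huw hwv hcw => hwv (hN huw huv hcw)
    · exact fun w _ hwu => hu w hwu
    · exact hu v hvu (by simpa using congrFun h u)
    · simp [Equiv.swap_apply_of_ne_of_ne hwu hwv]
  · refine ⟨Function.update c v (c u), hc.update ?_, fun h => ?_, fun w _ hwv => ?_⟩
    · exact fun w hvw => hu w (by rintro rfl; exact huv hvw.symm)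
    · exact hu v hvu (by simpa using (congrFun h v).symm)
    · simp [hwv]

lemma criticalSet_of_forall_exists_recoloring {S : Finset V} (hS : Determining G c S)
    (hmin : ∀ v ∈ S, ∃ c', properColoring G k c' ∧ c' ≠ c ∧ ∀ w ∈ S, w ≠ v → c' w = c w) :
    CriticalSet G c S := by
  refine ⟨hS, fun T hTS hT => ?_⟩
  obtain ⟨v, hvS, hvT⟩ := exists_of_ssubset hTS
  obtain ⟨c', hc', hne, hagree⟩ := hmin v hvS
  exact hne (hT c' hc' fun w hw => hagree w (hTS.1 hw) (by rintro rfl; exact hvT hw))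

variable [Fintype V] [DecidableEq V]

lemma determining_univ_erase_of_colorful {v : V} (hv : Colorful G c v) :
    Determining G c (univ.erase v) := by
  intro c' hc' hagree
  funext x
  by_cases hx : x = v
  · subst hx
    obtain ⟨w, rfl | hxw, hw⟩ := hv (c' x)
    · exact hw.symm
    · exact absurd (hw ▸ (hagree w (mem_erase.2 ⟨hxw.ne.symm, mem_univ w⟩)).symm) (hc' hxw)
  · exact hagree x (mem_erase.2 ⟨hx, mem_univ x⟩)

lemma CriticalSet.ne_univ_of_colorful {S : Finset V} (hS : CriticalSet G c S) {v : V}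
    (hv : Colorful G c v) : S ≠ univ := by
  rintro rfl
  exact hS.2 _ (erase_ssubset (mem_univ v)) (determining_univ_erase_of_colorful hv)

lemma criticalSet_univ_erase (hc : properColoring G k c) {u : V} (hu : ∀ w, w ≠ u → c w ≠ c u)
    (hN : Set.InjOn c (G.neighborSet u)) (hcol : Colorful G c u) :
    CriticalSet G c (univ.erase u) := by
  refine criticalSet_of_forall_exists_recoloring (determining_univ_erase_of_colorful hcol)
    fun v hv => ?_
  obtain ⟨c', hc', hne, hagree⟩ := exists_recoloring_of_unique_color hc hu hN (ne_of_mem_erase hv)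
  exact ⟨c', hc', hne, fun w hw => hagree w (ne_of_mem_erase hw)⟩

end Critical

lemma Fin.eq_or_eq_or_eq_of_ne_of_ne_of_ne :
    ∀ {x y z : Fin 3}, x ≠ y → y ≠ z → x ≠ z → ∀ a, a = x ∨ a = y ∨ a = z := by
  decide

section Cycle

variable {n : ℕ} [NeZero n]

lemma Fin.val_add_one_eq_ite (i : Fin n) :
    ((i + 1 : Fin n) : ℕ) = if (i : ℕ) + 1 = n then 0 else (i : ℕ) + 1 := by
  rw [Fin.val_add, Fin.val_one', Nat.add_mod_mod]
  split_ifs with h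
  · rw [h, Nat.mod_self]
  · exact Nat.mod_eq_of_lt (by omega)

lemma cycGraph_adj {v w : Fin n} : (cycGraph n).Adj v w ↔ v ≠ w ∧ (v + 1 = w ∨ w + 1 = v) := by
  simp [cycGraph]

lemma cycGraph_adj_add_one (hn : 2 ≤ n) (v : Fin n) : (cycGraph n).Adj v (v + 1) := by
  refine cycGraph_adj.2 ⟨fun h => ?_, .inl rfl⟩
  have := Fin.val_add_one_eq_ite v
  rw [← h] at this
  split_ifs at this <;> omega

lemma properColoring_cycGraph {k : ℕ} {c : Fin n → Fin k} (h : ∀ i, c i ≠ c (i + 1)) :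
    properColoring (cycGraph n) k c := by
  intro v w hvw
  obtain ⟨-, rfl | rfl⟩ := cycGraph_adj.1 hvw
  exacts [h v, (h w).symm]

lemma colorful_add_one {c : Fin n → Fin 3} (hn : 2 ≤ n) (hc : properColoring (cycGraph n) 3 c)
    {v : Fin n} (hv : c v ≠ c (v + 1 + 1)) : Colorful (cycGraph n) c (v + 1) := by
  have hA₁ := cycGraph_adj_add_one hn v
  have hA₂ := cycGraph_adj_add_one hn (v + 1)
  intro a
  rcases Fin.eq_or_eq_or_eq_of_ne_of_ne_of_ne (hc hA₁) (hc hA₂) hv a with rfl | rfl | rfl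
  exacts [⟨v, .inr hA₁.symm, rfl⟩, ⟨v + 1, .inl rfl, rfl⟩, ⟨v + 1 + 1, .inr hA₂, rfl⟩]

open Fin.NatCast Fin.CommRing in
lemma apply_add_one_eq_of_odd {α : Type*} {f : Fin n → α} (hn : Odd n)
    (hf : ∀ v, f (v + 1 + 1) = f v) (v : Fin n) : f (v + 1) = f v := by
  have hiter : ∀ j : ℕ, f (v + 2 * j) = f v := by
    intro j
    induction j with
    | zero => simp
    | succ j ih =>
      calc f (v + 2 * (j + 1 : ℕ)) = f (v + 2 * j + 1 + 1) := by push_cast; ring_nf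
        _ = f v := by rw [hf, ih]
  obtain ⟨m, hm⟩ := hn
  have htwo : (2 : Fin n) * (m + 1 : ℕ) = 1 := by
    have : 2 * (m + 1) = n + 1 := by omega
    simpa [Fin.natCast_self] using congrArg (Nat.cast : ℕ → Fin n) this
  rw [← hiter (m + 1), htwo]

theorem exists_colorful_cycGraph (hn : Odd n) (h3 : 3 ≤ n) {c : Fin n → Fin 3}
    (hc : properColoring (cycGraph n) 3 c) : ∃ v, Colorful (cycGraph n) c v := by
  by_contra! hnone
  have hperiodic : ∀ v, c (v + 1 + 1) = c v := fun v =>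
    by_contra fun h => hnone _ (colorful_add_one (by omega) hc (Ne.symm h))
  exact hc (cycGraph_adj_add_one (by omega) 0) (apply_add_one_eq_of_odd hn hperiodic 0).symm

def cycColoring (n : ℕ) [NeZero n] : Fin n → Fin 3 :=
  fun i => if i = 0 then 2 else if (i : ℕ) % 2 = 0 then 1 else 0

lemma cycColoring_ne_of_ne_zero {w : Fin n} (hw : w ≠ 0) : cycColoring n w ≠ cycColoring n 0 := by
  simp only [cycColoring, if_neg hw]
  split_ifs <;> decide

lemma properColoring_cycColoring (hn : Odd n) (h3 : 3 ≤ n) :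
    properColoring (cycGraph n) 3 (cycColoring n) := by
  refine properColoring_cycGraph fun i => ?_
  have hsucc := Fin.val_add_one_eq_ite i
  have := Nat.odd_iff.1 hn
  simp only [cycColoring, Fin.ext_iff, Fin.val_zero]
  split_ifs at hsucc ⊢ <;> first | decide | omega

lemma cycGraph_adj_zero_iff (h3 : 3 ≤ n) {w : Fin n} :
    (cycGraph n).Adj 0 w ↔ (w : ℕ) = 1 ∨ (w : ℕ) = n - 1 := by
  rw [cycGraph_adj, zero_add, ne_eq, Fin.ext_iff, Fin.ext_iff, Fin.ext_iff, Fin.val_add_one_eq_ite,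
    Fin.val_one', Fin.val_zero, Nat.mod_eq_of_lt (by omega)]
  split_ifs <;> simp only [or_false, or_true, and_true] <;> omega

lemma injOn_cycColoring_neighborSet_zero (hn : Odd n) (h3 : 3 ≤ n) :
    Set.InjOn (cycColoring n) ((cycGraph n).neighborSet 0) := by
  intro x hx y hy hxy
  rw [mem_neighborSet, cycGraph_adj_zero_iff h3] at hx hy
  have := Nat.odd_iff.1 hn
  simp only [cycColoring, Fin.ext_iff, Fin.val_zero] at hxy ⊢
  split_ifs at hxy <;> omega

lemma colorful_cycColoring_zero (hn : Odd n) (h3 : 3 ≤ n) :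
    Colorful (cycGraph n) (cycColoring n) 0 := by
  have := Nat.odd_iff.1 hn
  intro a
  fin_cases a
  · exact ⟨⟨1, by omega⟩, .inr ((cycGraph_adj_zero_iff h3).2 (.inl rfl)), by
      simp [cycColoring, Fin.ext_iff]⟩
  · exact ⟨⟨n - 1, by omega⟩, .inr ((cycGraph_adj_zero_iff h3).2 (.inr rfl)), by
      simp [cycColoring, Fin.ext_iff, show n - 1 ≠ 0 by omega, show (n - 1) % 2 = 0 by omega]⟩
  · exact ⟨0, .inl rfl, by simp [cycColoring]⟩

lemma card_le_of_criticalSet_cycGraph (hn : Odd n) (h3 : 3 ≤ n)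
    {c : Fin n → Fin 3} (hc : properColoring (cycGraph n) 3 c) {S : Finset (Fin n)}
    (hS : CriticalSet (cycGraph n) c S) : S.card ≤ n - 1 := by
  obtain ⟨v, hv⟩ := exists_colorful_cycGraph hn h3 hc
  have := card_lt_card (ssubset_univ_iff.2 (hS.ne_univ_of_colorful hv))
  rw [card_univ, Fintype.card_fin] at this
  omega

end Cycle

theorem stmt7 (n : ℕ) [NeZero n] (hn : Odd n) (h3 : 3 ≤ n) :
    IsGreatest {m : ℕ | ∃ (c : Fin n → Fin 3) (S : Finset (Fin n)),
      properColoring (cycGraph n) 3 c ∧ CriticalSet (cycGraph n) c S ∧ S.card = m}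
      (n - 1) := by
  refine ⟨⟨cycColoring n, univ.erase 0, properColoring_cycColoring hn h3, ?_, by simp⟩, ?_⟩
  · exact criticalSet_univ_erase (properColoring_cycColoring hn h3)
      (fun _ => cycColoring_ne_of_ne_zero)
      (injOn_cycColoring_neighborSet_zero hn h3) (colorful_cycColoring_zero hn h3)
  · rintro m ⟨c, S, hc, hS, rfl⟩
    exact card_le_of_criticalSet_cycGraph hn h3 hc hS
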